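/- arXiv:2107.08763 — 4 statements merged into one kernel-verified Lean document; each statement's English description precedes it below -/
import Mathlib

section
/- The function f(x, y) = x^j / y^{j-1} is jointly convex on the positive quadrant ℝ₊² for every real j ≥ 1. That is, for all x₀, x₁ > 0, y₀, y₁ > 0 and a ∈ [0,1], letting x_a = a x₀ + (1-a) x₁ and y_a = a y₀ + (1-a) y₁, we have x_a^j / y_a^{j-1} ≤ a · x₀^j / y₀^{j-1} + (1-a) · x₁^j / y₁^{j-1}. -/
/-!
`x ^ j / y ^ (j - 1) = y * (x / y) ^ j` is the perspective `(x, y) ↦ y f(x / y)` of the convex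
function `f = (· ^ j)` on `[0, ∞)`, and perspectives of convex functions are jointly convex: with
`X = a x₀ + b x₁` and `Y = a y₀ + b y₁`, the point `X / Y` is the convex combination of
`x₀ / y₀` and `x₁ / y₁` with weights `a y₀ / Y` and `b y₁ / Y`.
-/

lemma ConvexOn.perspective_le {𝕜 : Type*} [Field 𝕜] [LinearOrder 𝕜] [IsStrictOrderedRing 𝕜]
    {s : Set 𝕜} {f : 𝕜 → 𝕜} (hf : ConvexOn 𝕜 s f) {x₀ x₁ y₀ y₁ a b : 𝕜}
    (hy₀ : 0 < y₀) (hy₁ : 0 < y₁) (ha : 0 ≤ a) (hb : 0 ≤ b) (hab : a + b = 1)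
    (h₀ : x₀ / y₀ ∈ s) (h₁ : x₁ / y₁ ∈ s) :
    (a * y₀ + b * y₁) * f ((a * x₀ + b * x₁) / (a * y₀ + b * y₁))
      ≤ a * (y₀ * f (x₀ / y₀)) + b * (y₁ * f (x₁ / y₁)) := by
  have hY_pos : 0 < a * y₀ + b * y₁ := convex_Ioi 0 hy₀ hy₁ ha hb hab
  set Y := a * y₀ + b * y₁
  have hweights : a * y₀ / Y + b * y₁ / Y = 1 := by rw [← add_div, div_self hY_pos.ne']
  have hconv := hf.2 h₀ h₁ (by positivity) (by positivity) hweights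
  have hpoint : (a * y₀ / Y) • (x₀ / y₀) + (b * y₁ / Y) • (x₁ / y₁) = (a * x₀ + b * x₁) / Y := by
    simp only [smul_eq_mul]
    field_simp
  rw [hpoint, smul_eq_mul, smul_eq_mul] at hconv
  calc Y * f ((a * x₀ + b * x₁) / Y)
      ≤ Y * (a * y₀ / Y * f (x₀ / y₀) + b * y₁ / Y * f (x₁ / y₁)) :=
        mul_le_mul_of_nonneg_left hconv hY_pos.le
    _ = a * (y₀ * f (x₀ / y₀)) + b * (y₁ * f (x₁ / y₁)) := by
        field_simp

lemma Real.mul_div_rpow_eq_rpow_div_rpow_sub_one (j : ℝ) {x y : ℝ} (hx : 0 ≤ x) (hy : 0 < y) :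
    y * (x / y) ^ j = x ^ j / y ^ (j - 1) := by
  rw [Real.div_rpow hx hy.le, Real.rpow_sub hy, Real.rpow_one]
  have : 0 < y ^ j := Real.rpow_pos_of_pos hy j
  field_simp

theorem rpow_div_jointly_convex (j : ℝ) (hj : 1 ≤ j)
    (x₀ x₁ y₀ y₁ a : ℝ) (hx₀ : 0 < x₀) (hx₁ : 0 < x₁) (hy₀ : 0 < y₀) (hy₁ : 0 < y₁)
    (ha₀ : 0 ≤ a) (ha₁ : a ≤ 1) :
    (a * x₀ + (1 - a) * x₁) ^ j / (a * y₀ + (1 - a) * y₁) ^ (j - 1)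
      ≤ a * (x₀ ^ j / y₀ ^ (j - 1)) + (1 - a) * (x₁ ^ j / y₁ ^ (j - 1)) := by
  have hb : 0 ≤ 1 - a := sub_nonneg.mpr ha₁
  have hperspective := (convexOn_rpow hj).perspective_le hy₀ hy₁ ha₀ hb (add_sub_cancel a 1)
    (Set.mem_Ici.mpr (div_pos hx₀ hy₀).le) (Set.mem_Ici.mpr (div_pos hx₁ hy₁).le)
  have hY : 0 < a * y₀ + (1 - a) * y₁ := convex_Ioi (0 : ℝ) hy₀ hy₁ ha₀ hb (add_sub_cancel a 1)
  rwa [Real.mul_div_rpow_eq_rpow_div_rpow_sub_one j (by positivity) hY,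
    Real.mul_div_rpow_eq_rpow_div_rpow_sub_one j hx₀.le hy₀,
    Real.mul_div_rpow_eq_rpow_div_rpow_sub_one j hx₁.le hy₁] at hperspective
end

section
/- Let k ≥ 1 be an integer, ε₀ ≥ 0, p = 1/(e^{ε₀}+1), and let μ₀ be the Binomial(k, p) distribution on {0,...,k}. Define μ₁(m) = (1-p)·C(k-1, m-1)·p^{m-1}(1-p)^{k-m} + p·C(k-1, m)·p^m (1-p)^{k-m-1} (with the convention C(k-1,-1)=0 and C(k-1,k)=0). Then for every m ∈ {0,...,k} with μ₀(m) > 0, μ₁(m)/μ₀(m) - 1 = ((e^{2ε₀}-1)/(k e^{ε₀})) · (m - k/(e^{ε₀}+1)). -/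
/-! The binomial identities `m C(k,m) = k C(k-1,m-1)` and `(k-m) C(k,m) = k C(k-1,m)` give
`k p (1-p) μ₁(m) = μ₀(m) (m (1-p)² + (k-m) p²)`. Hence `μ₁(m)/μ₀(m)` is the mean of the odds
`(1-p)/p = e^{ε₀}` and of its inverse, weighted by `m` and `k - m`, and the identity is algebra
in `e^{ε₀}`. -/

open Real

noncomputable def μ₀ (k : ℕ) (p : ℝ) (m : ℕ) : ℝ :=
  (k.choose m : ℝ) * p ^ m * (1 - p) ^ (k - m)

noncomputable def μ₁ (k : ℕ) (p : ℝ) (m : ℕ) : ℝ :=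
  (1 - p) * (if m = 0 then 0 else ((k - 1).choose (m - 1) : ℝ)) * p ^ (m - 1) * (1 - p) ^ (k - m)
    + p * ((k - 1).choose m : ℝ) * p ^ m * (1 - p) ^ (k - m - 1)

theorem cast_choose_mul_succ_eq (n m : ℕ) :
    (n.choose m : ℝ) * (n + 1) = ((n + 1).choose m : ℝ) * ((n + 1 : ℝ) - m) := by
  rcases le_or_gt m (n + 1) with hm | hm
  · have h := congrArg (Nat.cast (R := ℝ)) (Nat.choose_mul_succ_eq n m)
    push_cast [Nat.cast_sub hm] at h
    exact h
  · simp [Nat.choose_eq_zero_of_lt hm, Nat.choose_eq_zero_of_lt (Nat.lt_of_succ_lt hm)]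

theorem add_one_mul_μ₁_eq (n m : ℕ) (p : ℝ) :
    (n + 1 : ℝ) * p * (1 - p) * μ₁ (n + 1) p m
      = μ₀ (n + 1) p m * (m * (1 - p) ^ 2 + ((n + 1 : ℝ) - m) * p ^ 2) := by
  have hdown : (n + 1 : ℝ) * p * (1 - p) * ((1 - p) * (if m = 0 then 0 else (n.choose (m - 1) : ℝ))
      * p ^ (m - 1) * (1 - p) ^ (n + 1 - m)) = μ₀ (n + 1) p m * (m * (1 - p) ^ 2) := by
    rcases m with _ | m
    · simp
    · have h := congrArg (Nat.cast (R := ℝ)) (Nat.add_one_mul_choose_eq n m)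
      push_cast at h
      simp only [μ₀, Nat.add_sub_add_right, add_tsub_cancel_right, if_neg (Nat.succ_ne_zero m)]
      push_cast
      linear_combination (p ^ (m + 1) * (1 - p) ^ (n - m) * (1 - p) ^ 2) * h
  have hup : (n + 1 : ℝ) * p * (1 - p) * (p * (n.choose m : ℝ) * p ^ m * (1 - p) ^ (n + 1 - m - 1))
      = μ₀ (n + 1) p m * (((n + 1 : ℝ) - m) * p ^ 2) := by
    have h := cast_choose_mul_succ_eq n m
    rcases le_or_gt m n with hm | hm
    · simp only [μ₀]
      rw [show n + 1 - m = n - m + 1 by omega, Nat.add_sub_cancel, pow_succ]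
      linear_combination (p ^ (m + 2) * (1 - p) ^ (n - m + 1)) * h
    · have hzero : ((n + 1).choose m : ℝ) * ((n + 1 : ℝ) - m) = 0 := by
        rw [← h, Nat.choose_eq_zero_of_lt hm]; simp
      simp only [μ₀, Nat.choose_eq_zero_of_lt hm]
      linear_combination (-(p ^ m * (1 - p) ^ (n + 1 - m) * p ^ 2)) * hzero
  simp only [μ₁, Nat.add_sub_cancel] at hdown hup ⊢
  linear_combination hdown + hup

theorem μ₁_div_μ₀ {k : ℕ} (hk : 1 ≤ k) {p : ℝ} (hp₀ : p ≠ 0) (hp₁ : 1 - p ≠ 0) {m : ℕ}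
    (hμ₀ : μ₀ k p m ≠ 0) :
    μ₁ k p m / μ₀ k p m = (m * ((1 - p) / p) + ((k : ℝ) - m) * (p / (1 - p))) / k := by
  obtain ⟨n, rfl⟩ := Nat.exists_eq_add_of_le' hk
  have h := add_one_mul_μ₁_eq n m p
  push_cast
  field_simp
  linear_combination h

theorem ratio_identity_2RR_general (k : ℕ) (hk : 1 ≤ k) (ε₀ : ℝ)
    (p : ℝ) (hp : p = 1 / (Real.exp ε₀ + 1))
    (m : ℕ) (hpos : 0 < μ₀ k p m) :
    μ₁ k p m / μ₀ k p m - 1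
      = ((Real.exp (2 * ε₀) - 1) / (k * Real.exp ε₀)) * ((m : ℝ) - k / (Real.exp ε₀ + 1)) := by
  set E := Real.exp ε₀
  have hE : 0 < E := Real.exp_pos ε₀
  have hE2 : Real.exp (2 * ε₀) = E ^ 2 := by rw [two_mul, Real.exp_add, sq]
  have hodds : (1 - p) / p = E := by rw [hp]; field_simp; ring
  have hp₀ : p ≠ 0 := by rw [hp]; positivity
  have hp₁ : 1 - p ≠ 0 := fun h ↦ hE.ne' (by rw [← hodds, h, zero_div])
  have hk₀ : (k : ℝ) ≠ 0 := by positivity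
  rw [μ₁_div_μ₀ hk hp₀ hp₁ hpos.ne', hE2, hodds, show p / (1 - p) = E⁻¹ by rw [← hodds, inv_div]]
  field_simp
  ring

theorem ratio_identity_2RR (k : ℕ) (hk : 1 ≤ k) (ε₀ : ℝ) (hε₀ : 0 ≤ ε₀)
    (p : ℝ) (hp : p = 1 / (Real.exp ε₀ + 1))
    (m : ℕ) (hm : m ≤ k) (hpos : 0 < μ₀ k p m) :
    μ₁ k p m / μ₀ k p m - 1
      = ((Real.exp (2 * ε₀) - 1) / (k * Real.exp ε₀)) * ((m : ℝ) - k / (Real.exp ε₀ + 1)) :=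
  ratio_identity_2RR_general k hk ε₀ p hp m hpos
end

section
/- Monotonicity under convex combination (data processing for ternary divergence under mixtures): let Ω be a finite set and suppose P = Σ_{c∈I} w_c P_c, Q = Σ_c w_c Q_c, R = Σ_c w_c R_c where w is a probability vector over a finite index set I, and each P_c, Q_c, R_c is a pmf on Ω with R_c > 0 everywhere. Then for α ≥ 1, Σ_h |P(h)-Q(h)|^α / R(h)^{α-1} ≤ Σ_{c∈I} w_c Σ_h |P_c(h)-Q_c(h)|^α / R_c(h)^{α-1}. -/
/-!
For each `h` the summand is the perspective `(x, y) ↦ |x| ^ α / y ^ (α - 1)` of the convex map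
`x ↦ |x| ^ α`, and perspectives of convex maps are jointly convex. Concretely, after the triangle
inequality `|∑ w P - ∑ w Q| ≤ ∑ w |P - Q|`, this is Radon's inequality, which is Jensen's
inequality for `t ↦ t ^ α` with weights `w c * R c h / ∑ w R` at the points `|P c h - Q c h| / R c h`.
-/

open Finset Real

lemma rpow_div_rpow_sub_one_eq_mul_div_rpow {a b : ℝ} (ha : 0 ≤ a) (hb : 0 < b) (α : ℝ) :
    a ^ α / b ^ (α - 1) = b * (a / b) ^ α := by
  rw [div_rpow ha hb.le, rpow_sub_one hb.ne']
  field_simp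

theorem radon_inequality {ι : Type*} (s : Finset ι) {w a b : ι → ℝ}
    (hw : ∀ i ∈ s, 0 ≤ w i) (ha : ∀ i ∈ s, 0 ≤ a i) (hb : ∀ i ∈ s, 0 < b i)
    {α : ℝ} (hα : 1 ≤ α) :
    (∑ i ∈ s, w i * a i) ^ α / (∑ i ∈ s, w i * b i) ^ (α - 1)
      ≤ ∑ i ∈ s, w i * (a i ^ α / b i ^ (α - 1)) := by
  set T := ∑ i ∈ s, w i * b i
  have hwb : ∀ i ∈ s, 0 ≤ w i * b i := fun i hi => mul_nonneg (hw i hi) (hb i hi).le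
  rcases (show 0 ≤ T from sum_nonneg hwb).eq_or_lt with hT | hT
  · have hw0 : ∀ i ∈ s, w i = 0 := fun i hi =>
      (mul_eq_zero.1 ((sum_eq_zero_iff_of_nonneg hwb).1 hT.symm i hi)).resolve_right
        (hb i hi).ne'
    rw [sum_eq_zero fun i hi => by rw [hw0 i hi, zero_mul], zero_rpow (by linarith), zero_div]
    exact sum_nonneg fun i hi =>
      mul_nonneg (hw i hi) (div_nonneg (rpow_nonneg (ha i hi) _) (rpow_nonneg (hb i hi).le _))
  have jensen := rpow_arith_mean_le_arith_mean_rpow s (fun i => w i * b i / T) (fun i => a i / b i)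
    (fun i hi => div_nonneg (hwb i hi) hT.le) (by rw [← sum_div, div_self hT.ne'])
    (fun i hi => div_nonneg (ha i hi) (hb i hi).le) hα
  have hmean : ∑ i ∈ s, w i * b i / T * (a i / b i) = (∑ i ∈ s, w i * a i) / T := by
    rw [sum_div]
    refine sum_congr rfl fun i hi => ?_
    field_simp [(hb i hi).ne']
  calc (∑ i ∈ s, w i * a i) ^ α / T ^ (α - 1)
      = T * (∑ i ∈ s, w i * b i / T * (a i / b i)) ^ α := by
        rw [hmean, rpow_div_rpow_sub_one_eq_mul_div_rpow (sum_nonneg fun i hi =>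
          mul_nonneg (hw i hi) (ha i hi)) hT]
    _ ≤ T * ∑ i ∈ s, w i * b i / T * (a i / b i) ^ α := mul_le_mul_of_nonneg_left jensen hT.le
    _ = ∑ i ∈ s, w i * (a i ^ α / b i ^ (α - 1)) := by
        rw [mul_sum]
        refine sum_congr rfl fun i hi => ?_
        rw [rpow_div_rpow_sub_one_eq_mul_div_rpow (ha i hi) (hb i hi)]
        field_simp [hT.ne']

lemma abs_sum_mul_sub_sum_mul_le {ι : Type*} (s : Finset ι) {w x y : ι → ℝ}
    (hw : ∀ i ∈ s, 0 ≤ w i) :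
    |∑ i ∈ s, w i * x i - ∑ i ∈ s, w i * y i| ≤ ∑ i ∈ s, w i * |x i - y i| := by
  rw [← sum_sub_distrib]
  refine (abs_sum_le_sum_abs _ _).trans_eq (sum_congr rfl fun i hi => ?_)
  rw [← mul_sub, abs_mul, abs_of_nonneg (hw i hi)]

theorem ternary_div_convex_combination_general {Ω I : Type*} [Fintype Ω] [Fintype I]
    (w : I → ℝ) (hw : ∀ c, 0 ≤ w c)
    (P Q R : I → Ω → ℝ)
    (hR : ∀ c h, 0 < R c h)
    (α : ℝ) (hα : 1 ≤ α) :
    ∑ h, |(∑ c, w c * P c h) - (∑ c, w c * Q c h)| ^ α / (∑ c, w c * R c h) ^ (α - 1)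
      ≤ ∑ c, w c * ∑ h, |P c h - Q c h| ^ α / R c h ^ (α - 1) := by
  calc _ ≤ ∑ h, ∑ c, w c * (|P c h - Q c h| ^ α / R c h ^ (α - 1)) := by
        refine sum_le_sum fun h _ => ?_
        have hT : 0 ≤ ∑ c, w c * R c h := sum_nonneg fun c _ => mul_nonneg (hw c) (hR c h).le
        calc _ ≤ (∑ c, w c * |P c h - Q c h|) ^ α / (∑ c, w c * R c h) ^ (α - 1) := by
              gcongr
              exact abs_sum_mul_sub_sum_mul_le _ fun c _ => hw c
          _ ≤ _ := radon_inequality _ (fun c _ => hw c) (fun c _ => abs_nonneg _)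
              (fun c _ => hR c h) hα
    _ = _ := by
        simp_rw [mul_sum]
        exact sum_comm

theorem ternary_div_convex_combination {Ω I : Type*} [Fintype Ω] [Fintype I]
    (w : I → ℝ) (hw : ∀ c, 0 ≤ w c) (hws : ∑ c, w c = 1)
    (P Q R : I → Ω → ℝ)
    (hP : ∀ c h, 0 ≤ P c h) (hPs : ∀ c, ∑ h, P c h = 1)
    (hQ : ∀ c h, 0 ≤ Q c h) (hQs : ∀ c, ∑ h, Q c h = 1)
    (hR : ∀ c h, 0 < R c h) (hRs : ∀ c, ∑ h, R c h = 1)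
    (α : ℝ) (hα : 1 ≤ α) :
    ∑ h, |(∑ c, w c * P c h) - (∑ c, w c * Q c h)| ^ α / (∑ c, w c * R c h) ^ (α - 1)
      ≤ ∑ c, w c * ∑ h, |P c h - Q c h| ^ α / R c h ^ (α - 1) :=
  ternary_div_convex_combination_general w hw P Q R hR α hα
end

section
/- From ternary |χ|^α-DP of a shuffle mechanism to RDP of its subsampled version (Lemma 4, abstract form): let Ω be a finite set and suppose for each integer α with 2 ≤ α ≤ λ there is a pmf pair decomposition M = γ P_E + (1-γ) P_{E^c} and M' = γ Q_E + (1-γ) P_{E^c} on Ω (γ ∈ (0,1]) with M' > 0 everywhere, and suppose Σ_h |P_E(h)-Q_E(h)|^α / M'(h)^{α-1} ≤ ζ(α)^α for each such α. Then Σ_h M'(h) (M(h)/M'(h))^λ ≤ 1 + Σ_{α=2}^{λ} C(λ,α) γ^α ζ(α)^α. -/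
/-!
Writing the likelihood ratio as `M / M' = 1 + (M - M') / M'` and expanding the `λ`-th power
binomially, the `j = 0` term contributes `∑ M' = 1` and the `j = 1` term contributes
`∑ (M - M') = 0`. Each remaining term is at most `∑ |M - M'| ^ j / M' ^ (j - 1)`, and for the
subsampled pair `M - M' = γ (P_E - Q_E)`, so it is at most `γ ^ j ζ(j) ^ j`.
-/

open Finset

lemma sum_range_succ_eq_add_sum_Icc_two {R : Type*} [AddCommMonoid R] (f : ℕ → R)
    (hf : f 1 = 0) (n : ℕ) :
    ∑ j ∈ range (n + 1), f j = f 0 + ∑ j ∈ Icc 2 n, f j := by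
  have hdrop_one : ∑ j ∈ Ico 1 (n + 1), f j = ∑ j ∈ Icc 2 n, f j := by
    rw [← Ico_add_one_right_eq_Icc]
    refine (sum_subset (Ico_subset_Ico_left one_le_two) fun j hj hj' => ?_).symm
    obtain rfl : j = 1 := by simp only [mem_Ico] at hj hj'; omega
    exact hf
  rw [range_eq_Ico, sum_eq_sum_Ico_succ_bot n.succ_pos, hdrop_one]

section RatioMoment

variable {Ω : Type*} [Fintype Ω] (M M' : Ω → ℝ)

lemma sum_mul_div_pow_eq_sum_choose (hM' : ∀ h, M' h ≠ 0) (n : ℕ) :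
    ∑ h, M' h * (M h / M' h) ^ n
      = ∑ j ∈ range (n + 1), (n.choose j : ℝ) * ∑ h, M' h * ((M h - M' h) / M' h) ^ j := by
  have hratio : ∀ h, M h / M' h = (M h - M' h) / M' h + 1 := fun h => by
    field_simp [hM' h]; ring
  simp_rw [hratio, add_pow, one_pow, mul_one, mul_sum, sum_comm (γ := Ω)]
  exact sum_congr rfl fun j _ => sum_congr rfl fun h _ => by ring

lemma mul_div_pow_le_abs_pow_div_pow {m d : ℝ} (hm : 0 < m) {j : ℕ} (hj : 1 ≤ j) :
    m * (d / m) ^ j ≤ |d| ^ j / m ^ (j - 1) := by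
  have hmj : m ^ j = m * m ^ (j - 1) := by rw [← pow_succ', Nat.sub_add_cancel hj]
  calc m * (d / m) ^ j = d ^ j / m ^ (j - 1) := by
        rw [div_pow, hmj]; field_simp
    _ ≤ |d| ^ j / m ^ (j - 1) :=
        div_le_div_of_nonneg_right ((le_abs_self _).trans (abs_pow d j).le) (by positivity)

theorem sum_mul_div_pow_le (hM' : ∀ h, 0 < M' h) (hM's : ∑ h, M' h = 1) (hMs : ∑ h, M h = 1)
    (n : ℕ) :
    ∑ h, M' h * (M h / M' h) ^ n
      ≤ 1 + ∑ j ∈ Icc 2 n, (n.choose j : ℝ) * ∑ h, |M h - M' h| ^ j / M' h ^ (j - 1) := by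
  have hfirst : ∑ h, M' h * ((M h - M' h) / M' h) ^ 1 = 0 := by
    simp_rw [pow_one, mul_div_cancel₀ _ (hM' _).ne', sum_sub_distrib, hMs, hM's, sub_self]
  rw [sum_mul_div_pow_eq_sum_choose M M' (fun h => (hM' h).ne'),
    sum_range_succ_eq_add_sum_Icc_two _ (by rw [hfirst, mul_zero])]
  simp only [pow_zero, mul_one, Nat.choose_zero_right, Nat.cast_one, hM's]
  gcongr with j hj h
  exact mul_div_pow_le_abs_pow_div_pow (hM' h) (by simp only [mem_Icc] at hj; omega)

end RatioMoment

lemma sum_mixture_eq_one {Ω : Type*} [Fintype Ω] (γ : ℝ) {P R : Ω → ℝ}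
    (hP : ∑ h, P h = 1) (hR : ∑ h, R h = 1) :
    ∑ h, (γ * P h + (1 - γ) * R h) = 1 := by
  rw [sum_add_distrib, ← mul_sum, ← mul_sum, hP, hR]; ring

theorem ternary_dp_to_subsampled_rdp_general {Ω : Type*} [Fintype Ω]
    (lam : ℕ) (γ : ℝ) (hγ₀ : 0 < γ)
    (PE QE PEc : Ω → ℝ)
    (hPEs : ∑ h, PE h = 1)
    (hQEs : ∑ h, QE h = 1)
    (hPEcs : ∑ h, PEc h = 1)
    (hM' : ∀ h, 0 < γ * QE h + (1 - γ) * PEc h)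
    (ζ : ℕ → ℝ)
    (hζ : ∀ α ∈ Finset.Icc 2 lam,
      ∑ h, |PE h - QE h| ^ α / (γ * QE h + (1 - γ) * PEc h) ^ (α - 1) ≤ ζ α ^ α) :
    ∑ h, (γ * QE h + (1 - γ) * PEc h)
        * ((γ * PE h + (1 - γ) * PEc h) / (γ * QE h + (1 - γ) * PEc h)) ^ lam
      ≤ 1 + ∑ α ∈ Finset.Icc 2 lam, (lam.choose α : ℝ) * γ ^ α * ζ α ^ α := by
  set M' : Ω → ℝ := fun h => γ * QE h + (1 - γ) * PEc h
  have hdiff : ∀ α h, |(γ * PE h + (1 - γ) * PEc h) - M' h| ^ α = γ ^ α * |PE h - QE h| ^ α :=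
    fun α h => by
      rw [show γ * PE h + (1 - γ) * PEc h - M' h = γ * (PE h - QE h) by ring, abs_mul,
        abs_of_pos hγ₀, mul_pow]
  calc _ ≤ 1 + ∑ α ∈ Icc 2 lam, (lam.choose α : ℝ)
          * ∑ h, |(γ * PE h + (1 - γ) * PEc h) - M' h| ^ α / M' h ^ (α - 1) :=
        sum_mul_div_pow_le _ M' hM' (sum_mixture_eq_one γ hQEs hPEcs)
          (sum_mixture_eq_one γ hPEs hPEcs) lam
    _ = 1 + ∑ α ∈ Icc 2 lam, (lam.choose α : ℝ) * γ ^ α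
          * ∑ h, |PE h - QE h| ^ α / M' h ^ (α - 1) := by
        simp_rw [hdiff, mul_div_assoc, ← mul_sum, mul_assoc]
    _ ≤ _ := by
        gcongr with α hα
        exact hζ α hα

theorem ternary_dp_to_subsampled_rdp {Ω : Type*} [Fintype Ω]
    (lam : ℕ) (hlam : 2 ≤ lam) (γ : ℝ) (hγ₀ : 0 < γ) (hγ₁ : γ ≤ 1)
    (PE QE PEc : Ω → ℝ)
    (hPE : ∀ h, 0 ≤ PE h) (hPEs : ∑ h, PE h = 1)
    (hQE : ∀ h, 0 ≤ QE h) (hQEs : ∑ h, QE h = 1)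
    (hPEc : ∀ h, 0 ≤ PEc h) (hPEcs : ∑ h, PEc h = 1)
    (hM' : ∀ h, 0 < γ * QE h + (1 - γ) * PEc h)
    (ζ : ℕ → ℝ)
    (hζ : ∀ α ∈ Finset.Icc 2 lam,
      ∑ h, |PE h - QE h| ^ α / (γ * QE h + (1 - γ) * PEc h) ^ (α - 1) ≤ ζ α ^ α) :
    ∑ h, (γ * QE h + (1 - γ) * PEc h)
        * ((γ * PE h + (1 - γ) * PEc h) / (γ * QE h + (1 - γ) * PEc h)) ^ lam
      ≤ 1 + ∑ α ∈ Finset.Icc 2 lam, (lam.choose α : ℝ) * γ ^ α * ζ α ^ α :=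
  ternary_dp_to_subsampled_rdp_general lam γ hγ₀ PE QE PEc hPEs hQEs hPEcs hM' ζ hζ
end
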